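/- arXiv:1507.00809 — 2 statements merged into one kernel-verified Lean document; each statement's English description precedes it below -/
import Mathlib

section
/- Let d ≥ 1, let O ∈ O(d), let a₁, a₉ be nonzero reals, a₅ > 0, let a₄ ∈ ℝ^d be a column vector, a₈ ∈ ℝ^d a row vector, and a₇ ∈ ℝ. Let g be the (d+2)×(d+2) real block matrix g = [[a₁, 0, 0], [a₄, a₅ O, 0], [a₇, a₈, a₉]] (blocks of sizes 1, d, 1). Suppose that for every v ∈ ℝ^d there exists v' ∈ ℝ^d with g · N(v) = N(v') · g. Then: (a) a₅² = a₁ a₉; (b) for each v, the vector v' is uniquely determined and equals (a₉/a₅) · v Oᵀ; (c) a₈ = (a₉/a₅) · (Oᵀ a₄)ᵀ. In particular, if a₁ = a₅ then a₁ = a₅ = a₉. -/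
/-!
Comparing entries of `g N(v)` and `N(v') g`: the bottom row gives `a₅ v' O = a₉ v`, which pins
down `v'` because `O` is orthogonal; the first column gives `a₅ O vᵀ = a₁ v'ᵀ`, and the two
together at any `v ≠ 0` force `a₅² = a₁ a₉`. The bottom-left entry is a quadratic identity in `v`;
since `‖v'‖ = (a₉/a₅) ‖v‖` and `a₁ (a₉/a₅)² = a₉`, its quadratic terms cancel, leaving
`a₈ ⬝ᵥ v = (a₉/a₅) (Oᵀ a₄) ⬝ᵥ v` for every `v`.
-/

open Matrix

/-- The standard cusp matrix `N(v) = [[1,0,0],[vᵀ,I_d,0],[‖v‖²/2,v,1]]`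
(blocks of sizes `1, d, 1`). -/
noncomputable def cuspN (d : ℕ) (v : Fin d → ℝ) :
    Matrix (Fin 1 ⊕ Fin d ⊕ Fin 1) (Fin 1 ⊕ Fin d ⊕ Fin 1) ℝ :=
  Matrix.of fun i j =>
    match i, j with
    | Sum.inl _, Sum.inl _ => 1
    | Sum.inl _, _ => 0
    | Sum.inr (Sum.inl k), Sum.inl _ => v k
    | Sum.inr (Sum.inl k), Sum.inr (Sum.inl l) => if k = l then 1 else 0
    | Sum.inr (Sum.inl _), Sum.inr (Sum.inr _) => 0
    | Sum.inr (Sum.inr _), Sum.inl _ => dotProduct v v / 2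
    | Sum.inr (Sum.inr _), Sum.inr (Sum.inl l) => v l
    | Sum.inr (Sum.inr _), Sum.inr (Sum.inr _) => 1

/-- The block matrix `g = [[a₁,0,0],[a₄,a₅O,0],[a₇,a₈,a₉]]` (blocks of sizes `1, d, 1`). -/
noncomputable def lowerBlockMat (d : ℕ) (a₁ a₅ a₇ a₉ : ℝ) (a₄ a₈ : Fin d → ℝ)
    (O : Matrix (Fin d) (Fin d) ℝ) :
    Matrix (Fin 1 ⊕ Fin d ⊕ Fin 1) (Fin 1 ⊕ Fin d ⊕ Fin 1) ℝ :=
  Matrix.of fun i j =>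
    match i, j with
    | Sum.inl _, Sum.inl _ => a₁
    | Sum.inl _, _ => 0
    | Sum.inr (Sum.inl k), Sum.inl _ => a₄ k
    | Sum.inr (Sum.inl k), Sum.inr (Sum.inl l) => a₅ * O k l
    | Sum.inr (Sum.inl _), Sum.inr (Sum.inr _) => 0
    | Sum.inr (Sum.inr _), Sum.inl _ => a₇
    | Sum.inr (Sum.inr _), Sum.inr (Sum.inl l) => a₈ l
    | Sum.inr (Sum.inr _), Sum.inr (Sum.inr _) => a₉

lemma lowerBlockMat_mul_cuspN_eq_cuspN_mul_iff (d : ℕ) (a₁ a₅ a₇ a₉ : ℝ) (a₄ a₈ : Fin d → ℝ)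
    (O : Matrix (Fin d) (Fin d) ℝ) (v v' : Fin d → ℝ) :
    lowerBlockMat d a₁ a₅ a₇ a₉ a₄ a₈ O * cuspN d v =
        cuspN d v' * lowerBlockMat d a₁ a₅ a₇ a₉ a₄ a₈ O ↔
      a₅ • O *ᵥ v = a₁ • v' ∧
        a₈ ⬝ᵥ v + a₉ * (v ⬝ᵥ v) / 2 = a₁ * (v' ⬝ᵥ v') / 2 + v' ⬝ᵥ a₄ ∧
        a₅ • v' ᵥ* O = a₉ • v := by
  simp only [← Matrix.ext_iff, Sum.forall, funext_iff, mul_apply, Fintype.sum_sum_type,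
    lowerBlockMat, cuspN, of_apply, Fin.sum_univ_one, mulVec, vecMul, dotProduct,
    Pi.smul_apply, smul_eq_mul, mul_ite, ite_mul, mul_one, one_mul, mul_zero, zero_mul, add_zero,
    zero_add, Finset.sum_ite_eq, Finset.sum_ite_eq', Finset.mem_univ, if_true, Finset.sum_const_zero,
    forall_const, implies_true, and_self, and_true, true_and]
  refine and_congr (forall_congr' fun k => ?_) (and_congr ?_ (forall_congr' fun l => ?_))
  · rw [Finset.mul_sum, mul_comm a₁]
    simp only [mul_assoc]
    constructor <;> intro <;> linarith
  · constructor <;> intro <;> linarith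
  · rw [Finset.mul_sum]
    simp only [mul_left_comm _ a₅]
    constructor <;> intro <;> linarith

section Orthogonal

variable {n : Type*} [Fintype n] [DecidableEq n]

lemma mulVec_dotProduct_mulVec_of_transpose_mul_self {R : Type*} [CommSemiring R]
    {O : Matrix n n R} (hO : Oᵀ * O = 1) (v w : n → R) : O *ᵥ v ⬝ᵥ O *ᵥ w = v ⬝ᵥ w := by
  rw [dotProduct_mulVec, ← mulVec_transpose, mulVec_mulVec, hO, one_mulVec]

lemma eq_smul_vecMul_transpose_of_smul_vecMul_eq {𝕜 : Type*} [Field 𝕜] {O : Matrix n n 𝕜}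
    (hO : O * Oᵀ = 1) {a b : 𝕜} (ha : a ≠ 0) {v v' : n → 𝕜} (h : a • v' ᵥ* O = b • v) :
    v' = (b / a) • v ᵥ* Oᵀ := by
  have hv' : v' ᵥ* O = (b / a) • v := by
    rw [div_eq_inv_mul, mul_smul, ← h, smul_smul, inv_mul_cancel₀ ha, one_smul]
  rw [← smul_vecMul, ← hv', vecMul_vecMul, hO, vecMul_one]

end Orthogonal

section CuspConjugation

variable {d : ℕ} {a₁ a₅ a₇ a₉ : ℝ} {a₄ a₈ : Fin d → ℝ} {O : Matrix (Fin d) (Fin d) ℝ}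

lemma eq_smul_vecMul_transpose_of_lowerBlockMat_mul_cuspN (hO : O * Oᵀ = 1) (ha₅ : a₅ ≠ 0)
    {v v' : Fin d → ℝ} (hv : lowerBlockMat d a₁ a₅ a₇ a₉ a₄ a₈ O * cuspN d v =
      cuspN d v' * lowerBlockMat d a₁ a₅ a₇ a₉ a₄ a₈ O) :
    v' = (a₉ / a₅) • v ᵥ* Oᵀ :=
  eq_smul_vecMul_transpose_of_smul_vecMul_eq hO ha₅
    ((lowerBlockMat_mul_cuspN_eq_cuspN_mul_iff d a₁ a₅ a₇ a₉ a₄ a₈ O v v').mp hv).2.2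

lemma sq_eq_mul_of_lowerBlockMat_mul_cuspN (hO₁ : O * Oᵀ = 1) (hO₂ : Oᵀ * O = 1) (ha₅ : a₅ ≠ 0)
    {v v' : Fin d → ℝ} (hv0 : v ≠ 0) (hv : lowerBlockMat d a₁ a₅ a₇ a₉ a₄ a₈ O * cuspN d v =
      cuspN d v' * lowerBlockMat d a₁ a₅ a₇ a₉ a₄ a₈ O) :
    a₅ ^ 2 = a₁ * a₉ := by
  have hOv : O *ᵥ v ≠ 0 := fun h0 => hv0 <| by
    rw [← one_mulVec v, ← hO₂, ← mulVec_mulVec, h0, mulVec_zero]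
  have hcol := ((lowerBlockMat_mul_cuspN_eq_cuspN_mul_iff d a₁ a₅ a₇ a₉ a₄ a₈ O v v').mp hv).1
  rw [eq_smul_vecMul_transpose_of_lowerBlockMat_mul_cuspN hO₁ ha₅ hv, vecMul_transpose,
    smul_smul] at hcol
  have hscale : a₅ = a₁ * (a₉ / a₅) := smul_left_injective ℝ hOv hcol
  field_simp at hscale
  linarith

lemma eq_smul_mulVec_of_forall_lowerBlockMat_mul_cuspN (hO₁ : O * Oᵀ = 1) (hO₂ : Oᵀ * O = 1)
    (ha₅ : a₅ ≠ 0) (ha : a₅ ^ 2 = a₁ * a₉)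
    (h : ∀ v : Fin d → ℝ, ∃ v' : Fin d → ℝ, lowerBlockMat d a₁ a₅ a₇ a₉ a₄ a₈ O * cuspN d v =
      cuspN d v' * lowerBlockMat d a₁ a₅ a₇ a₉ a₄ a₈ O) :
    a₈ = (a₉ / a₅) • Oᵀ *ᵥ a₄ := by
  refine dotProduct_eq _ _ fun v => ?_
  obtain ⟨v', hv⟩ := h v
  have hcorner := ((lowerBlockMat_mul_cuspN_eq_cuspN_mul_iff d a₁ a₅ a₇ a₉ a₄ a₈ O v v').mp hv).2.1
  rw [eq_smul_vecMul_transpose_of_lowerBlockMat_mul_cuspN hO₁ ha₅ hv, vecMul_transpose,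
    smul_dotProduct, dotProduct_smul, mulVec_dotProduct_mulVec_of_transpose_mul_self hO₂,
    smul_dotProduct, dotProduct_comm _ a₄, dotProduct_mulVec, ← mulVec_transpose] at hcorner
  have hsq : a₁ * (a₉ / a₅ * (a₉ / a₅)) = a₉ := by
    field_simp
    linear_combination a₉ * ha.symm
  rw [smul_dotProduct]
  simp only [smul_eq_mul] at hcorner ⊢
  linear_combination hcorner + (v ⬝ᵥ v) / 2 * hsq

end CuspConjugation

theorem stmt5_general (d : ℕ) (hd : 1 ≤ d)
    (O : Matrix (Fin d) (Fin d) ℝ) (hO : O ∈ Matrix.orthogonalGroup (Fin d) ℝ)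
    (a₁ a₉ : ℝ) (a₅ : ℝ) (ha₅ : 0 < a₅)
    (a₄ a₈ : Fin d → ℝ) (a₇ : ℝ)
    (h : ∀ v : Fin d → ℝ, ∃ v' : Fin d → ℝ,
      lowerBlockMat d a₁ a₅ a₇ a₉ a₄ a₈ O * cuspN d v =
        cuspN d v' * lowerBlockMat d a₁ a₅ a₇ a₉ a₄ a₈ O) :
    -- (a)
    a₅ ^ 2 = a₁ * a₉ ∧
    -- (b) the solution `v'` is uniquely determined and equals `(a₉/a₅) • v Oᵀ`
    (∀ v v' : Fin d → ℝ,
      lowerBlockMat d a₁ a₅ a₇ a₉ a₄ a₈ O * cuspN d v =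
        cuspN d v' * lowerBlockMat d a₁ a₅ a₇ a₉ a₄ a₈ O →
      v' = (a₉ / a₅) • vecMul v Oᵀ) ∧
    -- (c)
    a₈ = (a₉ / a₅) • Oᵀ.mulVec a₄ ∧
    -- in particular
    (a₁ = a₅ → a₁ = a₅ ∧ a₅ = a₉) := by
  have hO₁ : O * Oᵀ = 1 := (mem_orthogonalGroup_iff _ _).mp hO
  have hO₂ : Oᵀ * O = 1 := (mem_orthogonalGroup_iff' _ _).mp hO
  obtain ⟨v', hv'⟩ := h (Pi.single ⟨0, hd⟩ 1)
  have ha : a₅ ^ 2 = a₁ * a₉ := sq_eq_mul_of_lowerBlockMat_mul_cuspN hO₁ hO₂ ha₅.ne'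
    (Pi.single_ne_zero_iff.mpr one_ne_zero) hv'
  refine ⟨ha, fun v v' => eq_smul_vecMul_transpose_of_lowerBlockMat_mul_cuspN hO₁ ha₅.ne',
    eq_smul_mulVec_of_forall_lowerBlockMat_mul_cuspN hO₁ hO₂ ha₅.ne' ha h, fun h₁₅ => ⟨h₁₅, ?_⟩⟩
  rw [h₁₅, sq] at ha
  exact mul_left_cancel₀ ha₅.ne' ha

/-- Lemmas 4.2 and 4.5 of the paper. If `g·N(v) = N(v')·g` has a
solution `v'` for every `v`, then `a₅² = a₁a₉`, the solution is uniquely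
`v' = (a₉/a₅)·vOᵀ`, and `a₈ = (a₉/a₅)·(Oᵀa₄)ᵀ`; in particular `a₁ = a₅` forces
`a₁ = a₅ = a₉`. -/
theorem stmt5 (d : ℕ) (hd : 1 ≤ d)
    (O : Matrix (Fin d) (Fin d) ℝ) (hO : O ∈ Matrix.orthogonalGroup (Fin d) ℝ)
    (a₁ a₉ : ℝ) (ha₁ : a₁ ≠ 0) (ha₉ : a₉ ≠ 0) (a₅ : ℝ) (ha₅ : 0 < a₅)
    (a₄ a₈ : Fin d → ℝ) (a₇ : ℝ)
    (h : ∀ v : Fin d → ℝ, ∃ v' : Fin d → ℝ,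
      lowerBlockMat d a₁ a₅ a₇ a₉ a₄ a₈ O * cuspN d v =
        cuspN d v' * lowerBlockMat d a₁ a₅ a₇ a₉ a₄ a₈ O) :
    -- (a)
    a₅ ^ 2 = a₁ * a₉ ∧
    -- (b) the solution `v'` is uniquely determined and equals `(a₉/a₅) • v Oᵀ`
    (∀ v v' : Fin d → ℝ,
      lowerBlockMat d a₁ a₅ a₇ a₉ a₄ a₈ O * cuspN d v =
        cuspN d v' * lowerBlockMat d a₁ a₅ a₇ a₉ a₄ a₈ O →
      v' = (a₉ / a₅) • vecMul v Oᵀ) ∧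
    -- (c)
    a₈ = (a₉ / a₅) • Oᵀ.mulVec a₄ ∧
    -- in particular
    (a₁ = a₅ → a₁ = a₅ ∧ a₅ = a₉) :=
  stmt5_general d hd O hO a₁ a₉ a₅ ha₅ a₄ a₈ a₇ h
end

section
/- Let S be a topological group acting continuously on a Hausdorff topological space X. Let Γ be a subgroup of S that acts properly discontinuously on X, i.e., for every compact subset K ⊆ X only finitely many γ ∈ Γ satisfy γ·K ∩ K ≠ ∅. Suppose there exists a compact subset F ⊆ S with S = Γ·F. Then for every x ∈ X, the stabilizer S_x = {s ∈ S : s·x = x} is a compact subgroup of S. -/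
open Pointwise

/-! If `s = γ f` fixes `x`, then `γ` carries the point `f • x` of the compact set
`K = F • x ∪ {x}` to the point `x` of `K`; proper discontinuity leaves only finitely many
such `γ ∈ Γ`, so the stabilizer lies in the compact set `T * F` with `T` finite. Being closed,
it is compact. -/

theorem MulAction.isClosed_stabilizer (S : Type*) {X : Type*} [Group S] [TopologicalSpace S]
    [TopologicalSpace X] [T1Space X] [MulAction S X] [ContinuousSMul S X] (x : X) :
    IsClosed (stabilizer S x : Set S) :=
  isClosed_singleton.preimage (continuous_id.smul continuous_const)

theorem MulAction.stabilizer_subset_mul_of_mul_eq_univ {S X : Type*} [Group S] [MulAction S X]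
    {Γ F : Set S} (hSF : Γ * F = Set.univ) {x : X} {K : Set X} (hxK : x ∈ K)
    (hFK : (fun s : S => s • x) '' F ⊆ K) :
    (stabilizer S x : Set S) ⊆
      {γ : S | γ ∈ Γ ∧ ((fun y => γ • y) '' K ∩ K).Nonempty} * F := by
  intro s hs
  obtain ⟨γ, hγ, f, hf, rfl⟩ : s ∈ Γ * F := hSF ▸ Set.mem_univ s
  have hγfx : γ • f • x = x := by rw [← mul_smul]; exact hs
  exact ⟨γ, ⟨hγ, x, ⟨f • x, hFK ⟨f, hf, rfl⟩, hγfx⟩, hxK⟩, f, hf, rfl⟩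

/-- the stabilizer compactness argument in part (i) of
Proposition 5.5 of the paper. If a topological group `S` acts continuously on a
Hausdorff space `X`, a subgroup `Γ ≤ S` acts properly discontinuously on `X`, and
`S = Γ·F` for some compact `F ⊆ S`, then every point stabilizer in `S` is compact. -/
theorem stmt8 {S X : Type*} [Group S] [TopologicalSpace S] [IsTopologicalGroup S]
    [TopologicalSpace X] [T2Space X] [MulAction S X] [ContinuousSMul S X]
    (Γ : Subgroup S)
    (hpd : ∀ K : Set X, IsCompact K →
      {γ : S | γ ∈ Γ ∧ ((fun x => γ • x) '' K ∩ K).Nonempty}.Finite)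
    (F : Set S) (hF : IsCompact F) (hSF : (Γ : Set S) * F = Set.univ) :
    ∀ x : X, IsCompact ((MulAction.stabilizer S x : Subgroup S) : Set S) := by
  intro x
  set K : Set X := insert x ((fun s : S => s • x) '' F)
  have hK : IsCompact K := (hF.image (continuous_id.smul continuous_const)).insert x
  exact ((hpd K hK).isCompact.mul hF).of_isClosed_subset (MulAction.isClosed_stabilizer S x)
    (MulAction.stabilizer_subset_mul_of_mul_eq_univ hSF (Set.mem_insert x _)
      (Set.subset_insert x _))
end
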